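/- arXiv:0812.4660 — 4 statements merged into one kernel-verified Lean document; each statement's English description precedes it below -/
import Mathlib

section
/- For the polynomial W = x_1^3 + x_1 x_2^2 + x_2 x_3^2 + ... + x_{n-1} x_n^2 in n variables, the quasihomogeneity degree is d = 3 (with suitable weights), while the exponent of the group of diagonal symmetries G_W is 2^{n-1}·3. -/
/-- The subgroup of `(ℂˣ)^n` cut out by the monomial relations of an exponent matrix `m`. -/
def expSym (n : ℕ) (m : Fin n → Fin n → ℕ) : Subgroup (Fin n → ℂˣ) where
  carrier := {α | ∀ i, ∏ j, α j ^ m i j = 1}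
  one_mem' := by intro i; simp
  mul_mem' := by
    intro α β hα hβ i
    simp only [Pi.mul_apply, mul_pow, Finset.prod_mul_distrib, hα i, hβ i, one_mul]
  inv_mem' := by
    intro α hα i
    simp only [Pi.inv_apply, inv_pow, Finset.prod_inv_distrib, hα i, inv_one]

/-! For the chain polynomial `x₀ ^ a + x₀ x₁ ^ b + ⋯ + x_{k-1} x_k ^ b`, the relations defining
`G_W` read `α₀ ^ a = 1` and `α_{i+1} ^ b = α_i⁻¹`, so by induction `α_i ^ (a * b ^ i) = 1` and the
exponent divides `a * b ^ k`. Conversely, for a primitive `a * b ^ k`-th root of unity `ζ`, the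
powers `α_i = ζ ^ ((-b) ^ (k - i))` form a symmetry whose last coordinate is `ζ` itself. For
`a = b + 1 = 3`, weight `1` on every variable makes `W` homogeneous of degree `3`. -/

def chainExpMatrix (a b n : ℕ) : Fin n → Fin n → ℕ := fun i j =>
  if (i : ℕ) = 0 then (if (j : ℕ) = 0 then a else 0)
  else (if (j : ℕ) = (i : ℕ) then b else if (j : ℕ) + 1 = (i : ℕ) then 1 else 0)

section Rows

variable {M : Type*} [CommMonoid M] (a b : ℕ) {k : ℕ} (f : Fin (k + 1) → M)

@[to_additive]
theorem prod_pow_chainExpMatrix_zero : ∏ j, f j ^ chainExpMatrix a b (k + 1) 0 j = f 0 ^ a := by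
  rw [Fintype.prod_eq_single 0 fun j hj => by simp [chainExpMatrix, Fin.val_ne_zero_iff.mpr hj]]
  simp [chainExpMatrix]

@[to_additive]
theorem prod_pow_chainExpMatrix_succ (i : Fin k) :
    ∏ j, f j ^ chainExpMatrix a b (k + 1) i.succ j = f i.castSucc * f i.succ ^ b := by
  rw [Fintype.prod_eq_mul i.castSucc i.succ Fin.castSucc_lt_succ.ne fun j ⟨h₁, h₂⟩ => by
    rw [Ne, Fin.ext_iff, Fin.val_castSucc] at h₁
    rw [Ne, Fin.ext_iff, Fin.val_succ] at h₂
    simp [chainExpMatrix, h₁, h₂]]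
  simp [chainExpMatrix]

end Rows

theorem sum_chainExpMatrix_succ_self (b : ℕ) {k : ℕ} (i : Fin (k + 1)) :
    ∑ j, chainExpMatrix (b + 1) b (k + 1) i j = b + 1 := by
  cases i using Fin.cases with
  | zero => simpa using sum_nsmul_chainExpMatrix_zero (b + 1) b (1 : Fin (k + 1) → ℕ)
  | succ i =>
    simpa [add_comm] using sum_nsmul_chainExpMatrix_succ (b + 1) b (1 : Fin (k + 1) → ℕ) i

section Symmetries

variable {a b k : ℕ}

theorem pow_eq_one_of_mem_expSym_chainExpMatrix {α : Fin (k + 1) → ℂˣ}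
    (hα : α ∈ expSym (k + 1) (chainExpMatrix a b (k + 1))) (i : Fin (k + 1)) :
    α i ^ (a * b ^ (i : ℕ)) = 1 := by
  induction i using Fin.induction with
  | zero => simpa [prod_pow_chainExpMatrix_zero] using hα 0
  | succ i ih =>
    have hrow : α i.castSucc * α i.succ ^ b = 1 := by
      simpa [prod_pow_chainExpMatrix_succ] using hα i.succ
    calc α i.succ ^ (a * b ^ (i.succ : ℕ)) = (α i.succ ^ b) ^ (a * b ^ (i : ℕ)) := by
          rw [← pow_mul, Fin.val_succ, pow_succ]; ring_nf
      _ = (α i.castSucc ^ (a * b ^ (i : ℕ)))⁻¹ := by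
          rw [eq_inv_of_mul_eq_one_right hrow, inv_pow]
      _ = 1 := by rw [← Fin.val_castSucc, ih, inv_one]

theorem exponent_expSym_chainExpMatrix_dvd :
    Monoid.exponent (expSym (k + 1) (chainExpMatrix a b (k + 1))) ∣ a * b ^ k :=
  Monoid.exponent_dvd_of_forall_pow_eq_one fun α => Subtype.ext <| funext fun i => by
    obtain ⟨c, hc⟩ : b ^ (i : ℕ) ∣ b ^ k := pow_dvd_pow b (Nat.lt_succ_iff.mp i.2)
    show (α : Fin (k + 1) → ℂˣ) i ^ (a * b ^ k) = 1
    rw [hc, ← mul_assoc, pow_mul, pow_eq_one_of_mem_expSym_chainExpMatrix α.2 i, one_pow]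

def chainSymmetry {G : Type*} [Group G] (b k : ℕ) (ζ : G) : Fin (k + 1) → G :=
  fun i => ζ ^ ((-b : ℤ) ^ (k - i))

theorem chainSymmetry_mem_expSym {ζ : ℂˣ} (hζ : ζ ^ (a * b ^ k) = 1) :
    chainSymmetry b k ζ ∈ expSym (k + 1) (chainExpMatrix a b (k + 1)) := by
  intro i
  cases i using Fin.cases with
  | zero =>
    rw [prod_pow_chainExpMatrix_zero]
    simp only [chainSymmetry, Fin.val_zero, Nat.sub_zero]
    rw [← zpow_natCast, ← zpow_mul,
      show (-b : ℤ) ^ k * a = (a * b ^ k : ℕ) * (-1) ^ k by push_cast; ring,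
      zpow_mul, zpow_natCast, hζ, one_zpow]
  | succ i =>
    rw [prod_pow_chainExpMatrix_succ]
    simp only [chainSymmetry, Fin.val_castSucc, Fin.val_succ]
    have hk : k - i = (k - (i + 1)) + 1 := by omega
    rw [← zpow_natCast, ← zpow_mul, ← zpow_add, hk, pow_succ,
      show (-b : ℤ) ^ (k - (i + 1)) * -b + (-b) ^ (k - (i + 1)) * b = 0 by ring, zpow_zero]

theorem exponent_expSym_chainExpMatrix (ha : a ≠ 0) (hb : b ≠ 0) :
    Monoid.exponent (expSym (k + 1) (chainExpMatrix a b (k + 1))) = a * b ^ k := by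
  have hN : a * b ^ k ≠ 0 := by positivity
  obtain ⟨ζ, hζ⟩ : ∃ ζ : ℂˣ, IsPrimitiveRoot ζ (a * b ^ k) :=
    ⟨_, (Complex.isPrimitiveRoot_exp _ hN).isUnit_unit hN⟩
  refine exponent_expSym_chainExpMatrix_dvd.antisymm ?_
  calc a * b ^ k = orderOf ζ := hζ.eq_orderOf
    _ ∣ orderOf (chainSymmetry b k ζ) := by
        simpa [chainSymmetry] using
          orderOf_apply_dvd_orderOf (x := chainSymmetry b k ζ) (Fin.last k)
    _ = orderOf (⟨_, chainSymmetry_mem_expSym hζ.pow_eq_one⟩ :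
          expSym (k + 1) (chainExpMatrix a b (k + 1))) := (Subgroup.orderOf_mk _ _).symm
    _ ∣ _ := Monoid.order_dvd_exponent _

end Symmetries

/-- For `W = x 0 ^ 3 + x 0 * x 1 ^ 2 + x 1 * x 2 ^ 2 + ... + x (n-2) * x (n-1) ^ 2`
(with exponent matrix `m`), the quasihomogeneity degree is `3` (for suitable positive
weights), while the exponent of the group of diagonal symmetries `G_W` is `2^(n-1) * 3`. -/
theorem stmt6 (n : ℕ) (hn : 1 ≤ n) (m : Fin n → Fin n → ℕ)
    (hm : ∀ i j : Fin n, m i j =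
      if (i : ℕ) = 0 then (if (j : ℕ) = 0 then 3 else 0)
      else (if (j : ℕ) = (i : ℕ) then 2 else if (j : ℕ) + 1 = (i : ℕ) then 1 else 0)) :
    (∃ c : Fin n → ℕ, (∀ j, 0 < c j) ∧ ∀ i, ∑ j, m i j * c j = 3) ∧
      Monoid.exponent (expSym n m) = 2 ^ (n - 1) * 3 := by
  obtain ⟨k, rfl⟩ := Nat.exists_eq_add_of_le' hn
  obtain rfl : m = chainExpMatrix 3 2 (k + 1) := funext₂ hm
  refine ⟨⟨1, fun _ => one_pos, fun i => by simpa using sum_chainExpMatrix_succ_self 2 i⟩, ?_⟩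
  rw [exponent_expSym_chainExpMatrix three_ne_zero two_ne_zero, Nat.add_sub_cancel, mul_comm]
end

section
/- Let C be a nodal curve of arithmetic genus 0 with a line bundle L such that on every irreducible component Z the degree d_Z of L satisfies d_Z < #(Z ∩ closure(C∖Z)) − 1 when Z meets the rest of the curve, and d_Z < 0 when C is irreducible (i.e. Z = C). Then H^0(C, L) = 0. -/
open SimpleGraph Finset

/-- In a tree, a nonempty vertex set in which every vertex has at least two
neighbours inside the set cannot exist. -/
lemma tree_no_core {ι : Type} [Fintype ι] [DecidableEq ι] {G : SimpleGraph ι} [DecidableRel G.Adj]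
    (hG : G.IsTree) (S : Finset ι) (hS : S.Nonempty)
    (h2 : ∀ v ∈ S, 2 ≤ ((G.neighborFinset v).filter (· ∈ S)).card) : False := by
  obtain ⟨v0, hv0⟩ := hS.exists_mem
  obtain ⟨v, hvS, hvmax⟩ := S.exists_max_image (fun x => G.dist v0 x) hS
  obtain ⟨u, hu, w, hw, huw⟩ := Finset.one_lt_card.mp (lt_of_lt_of_le one_lt_two (h2 v hvS))
  simp only [Finset.mem_filter, SimpleGraph.mem_neighborFinset] at hu hw
  -- for each neighbour `x ∈ S` of `v`, build a path from `v` to `v0` starting with `x`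
  have key : ∀ x : ι, G.Adj v x → G.dist v0 x ≤ G.dist v0 v →
      ∃ q : G.Walk v v0, q.IsPath ∧ q.support.tail.head? = some x := by
    intro x hvx hxd
    obtain ⟨P, hP, hPlen⟩ := hG.isConnected.exists_path_of_dist v0 x
    have hvP : v ∉ P.support := by
      intro hmem
      have h1 : G.dist v0 v ≤ (P.takeUntil v hmem).length := SimpleGraph.dist_le _
      have h2' : G.dist v x ≤ (P.dropUntil v hmem).length := SimpleGraph.dist_le _
      have h3 := congrArg SimpleGraph.Walk.length (P.take_spec hmem)
      rw [SimpleGraph.Walk.length_append] at h3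
      have hdx : G.dist v x = 1 := SimpleGraph.dist_eq_one_iff_adj.mpr hvx
      omega
    refine ⟨SimpleGraph.Walk.cons hvx P.reverse, ?_, ?_⟩
    · exact (hP.reverse).cons (by simpa [SimpleGraph.Walk.support_reverse] using hvP)
    · rw [SimpleGraph.Walk.support_cons, List.tail_cons, P.reverse.support_eq_cons]
      rfl
  obtain ⟨qu, hqu, hqu2⟩ := key u hu.1 (hvmax u hu.2)
  obtain ⟨qw, hqw, hqw2⟩ := key w hw.1 (hvmax w hw.2)
  have := (hG.existsUnique_path v v0).unique hqu hqw
  rw [this, hqw2] at hqu2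
  exact huw (Option.some.inj hqu2).symm

/-- Vanishing of global sections of a line bundle of low degrees on a nodal curve of
arithmetic genus `0`.  The curve is modeled by its dual graph, a tree `G` on the set `ι`
of irreducible components (each a `ℙ¹`); the line bundle `L` has degree `d v` on the
component `v` and its sections on `v` are polynomials of degree `≤ d v`; for adjacent
components `u v`, `a u v ∈ ℂ` is the node point on the component `u` (distinct points for
distinct neighbours) and the gluing of `L` at the node is by the nonwhere-zero constants
`c u v` with `c u v * c v u = 1`.  If on every component `Z` meeting the rest of the curve
one has `d_Z < #(Z ∩ closure (C∖Z)) − 1`, and `d_Z < 0` when `Z` is all of `C`, then every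
global section `p` of `L` vanishes: `H^0(C, L) = 0`. -/
theorem stmt12 (ι : Type) [Fintype ι] (G : SimpleGraph ι) [DecidableRel G.Adj]
    (hG : G.IsTree)
    (a : ι → ι → ℂ)
    (ha : ∀ u v w, G.Adj u v → G.Adj u w → v ≠ w → a u v ≠ a u w)
    (c : ι → ι → ℂ) (hc : ∀ u v, G.Adj u v → c u v * c v u = 1)
    (d : ι → ℤ)
    (hd1 : ∀ v, 0 < G.degree v → (d v : ℤ) < (G.degree v : ℤ) - 1)
    (hd2 : ∀ v, G.degree v = 0 → d v < 0)
    (p : ι → Polynomial ℂ)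
    (hdeg : ∀ v, p v = 0 ∨ ((p v).natDegree : ℤ) ≤ d v)
    (hglue : ∀ u v, G.Adj u v → (p u).eval (a u v) = c u v * (p v).eval (a v u)) :
    ∀ v, p v = 0 := by
  classical
  by_contra h
  push_neg at h
  set S : Finset ι := Finset.univ.filter (fun v => p v ≠ 0) with hSdef
  have hS : S.Nonempty := by
    obtain ⟨v, hv⟩ := h
    exact ⟨v, by simp [hSdef, hv]⟩
  refine tree_no_core hG S hS ?_
  intro v hvS
  have hpv : p v ≠ 0 := by simpa [hSdef] using hvS
  have hdv : ((p v).natDegree : ℤ) ≤ d v := (hdeg v).resolve_left hpv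
  have hdegpos : 0 < G.degree v := by
    rcases Nat.eq_zero_or_pos (G.degree v) with h0 | h0
    · have := hd2 v h0
      omega
    · exact h0
  have hlt := hd1 v hdegpos
  -- neighbours where p vanishes give distinct roots of p v
  set N0 : Finset ι := (G.neighborFinset v).filter (fun w => ¬ (w ∈ S)) with hN0
  have hroots : N0.card ≤ (p v).natDegree := by
    have hinj : ∀ x ∈ N0, ∀ y ∈ N0, a v x = a v y → x = y := by
      intro x hx y hy hxy
      by_contra hne
      exact ha v x y (by simpa using (Finset.mem_filter.mp hx).1)
        (by simpa using (Finset.mem_filter.mp hy).1) hne hxy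
    have hmaps : ∀ x ∈ N0, a v x ∈ (p v).roots.toFinset := by
      intro x hx
      have hadj : G.Adj v x := by simpa using (Finset.mem_filter.mp hx).1
      have hpx : p x = 0 := by
        have := (Finset.mem_filter.mp hx).2
        simpa [hSdef] using this
      have : (p v).eval (a v x) = 0 := by
        rw [hglue v x hadj, hpx]; simp
      simp [Multiset.mem_toFinset, Polynomial.mem_roots, hpv, this]
    calc N0.card ≤ (p v).roots.toFinset.card := Finset.card_le_card_of_injOn _ hmaps hinj
      _ ≤ Multiset.card (p v).roots := (p v).roots.toFinset_card_le
      _ ≤ (p v).natDegree := Polynomial.card_roots' _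
  have hsplit : ((G.neighborFinset v).filter (· ∈ S)).card + N0.card = G.degree v := by
    rw [hN0]
    rw [Finset.card_filter_add_card_filter_not]
    rfl
  omega
end

section
/- Define G_y(x,z) = Σ_{m,l≥0} s_{l+m−1} (B_m(y)/m!)(x^l/l!) z^{m−1} with s_{−1} = 0, where B_m are Bernoulli polynomials, and s(x) = Σ_{d≥0} s_d x^d/d!. Then (a) G_y(x,z) = G_0(x + yz, z), and (b) G_0(x + z, z) = G_0(x, z) + s(x). -/
open Finset

private lemma bern_eval (m : ℕ) (y : ℚ) :
    (Polynomial.bernoulli m).eval y =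
      ∑ i ∈ range (m+1), _root_.bernoulli i * (m.choose i : ℚ) * y ^ (m - i) := by
  rw [Polynomial.bernoulli_def, Polynomial.eval_finset_sum,
    ← Finset.sum_range_reflect]
  refine Finset.sum_congr rfl fun i hi => ?_
  rw [mem_range, Nat.lt_succ_iff] at hi
  simp only [Polynomial.eval_monomial, Nat.add_sub_cancel, Nat.sub_sub_self hi,
    Nat.choose_symm hi]

private lemma coeff_eq {n m i : ℕ} (hm : m ≤ n) (hi : i ≤ m) :
    (m.choose i : ℚ) * (i.factorial : ℚ) * ((n-i).factorial : ℚ) =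
      ((n-i).choose (n-m) : ℚ) * (m.factorial : ℚ) * ((n-m).factorial : ℚ) := by
  have h1 : ((m.choose i : ℕ) : ℚ) * (i.factorial : ℚ) * ((m-i).factorial : ℚ)
      = (m.factorial : ℚ) := by
    exact_mod_cast congrArg (Nat.cast : ℕ → ℚ) (Nat.choose_mul_factorial_mul_factorial hi)
  have hnm : n - m ≤ n - i := by omega
  have heq : (n - i) - (n - m) = m - i := by omega
  have h2 : (((n-i).choose (n-m) : ℕ) : ℚ) * ((n-m).factorial : ℚ) * ((m-i).factorial : ℚ)
      = ((n-i).factorial : ℚ) := by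
    have := Nat.choose_mul_factorial_mul_factorial hnm
    rw [heq] at this
    exact_mod_cast congrArg (Nat.cast : ℕ → ℚ) this
  have f1 : ((m.factorial : ℚ)) ≠ 0 := by exact_mod_cast m.factorial_ne_zero
  have f2 : (((n-m).factorial : ℚ)) ≠ 0 := by exact_mod_cast (n-m).factorial_ne_zero
  have f3 : ((i.factorial : ℚ)) ≠ 0 := by exact_mod_cast i.factorial_ne_zero
  have f4 : (((n-i).factorial : ℚ)) ≠ 0 := by exact_mod_cast (n-i).factorial_ne_zero
  linear_combination (((n-i).choose (n-m) : ℚ) * ((n-m).factorial : ℚ)) * h1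
    - ((m.choose i : ℚ) * (i.factorial : ℚ)) * h2

private lemma partA (n : ℕ) (x y z : ℚ) :
    ∑ m ∈ range (n + 1),
        ((Polynomial.bernoulli m).eval y / (m.factorial : ℚ)) *
          (x ^ (n - m) / ((n - m).factorial : ℚ)) * z ^ m =
      ∑ m ∈ range (n + 1),
        ((Polynomial.bernoulli m).eval 0 / (m.factorial : ℚ)) *
          ((x + y * z) ^ (n - m) / ((n - m).factorial : ℚ)) * z ^ m := by
  set f : ℕ → ℕ → ℚ := fun m i =>
    _root_.bernoulli i * (m.choose i : ℚ) * y ^ (m - i) / (m.factorial : ℚ) *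
      (x ^ (n - m) / ((n - m).factorial : ℚ)) * z ^ m with hf
  set g : ℕ → ℕ → ℚ := fun m j =>
    _root_.bernoulli m / (m.factorial : ℚ) *
      (x ^ j * (y * z) ^ (n - m - j) * ((n - m).choose j : ℚ) / ((n - m).factorial : ℚ)) *
      z ^ m with hg
  have hL : ∀ m ∈ range (n+1),
      ((Polynomial.bernoulli m).eval y / (m.factorial : ℚ)) *
        (x ^ (n - m) / ((n - m).factorial : ℚ)) * z ^ m = ∑ i ∈ range (n+1), f m i := by
    intro m hm
    rw [mem_range, Nat.lt_succ_iff] at hm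
    rw [bern_eval, Finset.sum_div, Finset.sum_mul, Finset.sum_mul]
    refine Finset.sum_subset (Finset.range_subset_range.mpr (by omega)) ?_
    intro i _ hi
    rw [mem_range, Nat.lt_succ_iff] at hi
    have : m < i := by omega
    simp [hf, Nat.choose_eq_zero_of_lt this]
  have hR : ∀ m ∈ range (n+1),
      ((Polynomial.bernoulli m).eval 0 / (m.factorial : ℚ)) *
        ((x + y * z) ^ (n - m) / ((n - m).factorial : ℚ)) * z ^ m
        = ∑ j ∈ range (n+1), g m j := by
    intro m hm
    rw [mem_range, Nat.lt_succ_iff] at hm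
    rw [Polynomial.bernoulli_eval_zero, add_pow, Finset.sum_div, Finset.mul_sum,
      Finset.sum_mul]
    refine Finset.sum_subset (Finset.range_subset_range.mpr (by omega)) ?_
    intro j _ hj
    rw [mem_range, Nat.lt_succ_iff] at hj
    have : n - m < j := by omega
    simp [hg, Nat.choose_eq_zero_of_lt this]
  rw [Finset.sum_congr rfl hL, Finset.sum_congr rfl hR, ← Finset.sum_product',
    ← Finset.sum_product']
  refine Finset.sum_nbij' (fun p => (p.2, n - p.1)) (fun p => (n - p.2, p.1)) ?_ ?_ ?_ ?_ ?_
  · intro p hp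
    simp only [mem_product, mem_range] at hp ⊢
    omega
  · intro p hp
    simp only [mem_product, mem_range] at hp ⊢
    omega
  · intro p hp
    simp only [mem_product, mem_range] at hp
    ext <;> simp <;> omega
  · intro p hp
    simp only [mem_product, mem_range] at hp
    ext <;> simp <;> omega
  · intro p hp
    simp only [mem_product, mem_range, Nat.lt_succ_iff] at hp
    obtain ⟨hm, hi⟩ := hp
    obtain ⟨m, i⟩ := p
    simp only [hf, hg]
    by_cases hle : i ≤ m
    · have hc := coeff_eq (n := n) hm hle
      obtain ⟨j, rfl⟩ := Nat.exists_eq_add_of_le hle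
      have e1 : n - i - (n - (i+j)) = j := by omega
      have e2 : (i + j) - i = j := by omega
      rw [e1, e2, mul_pow, pow_add]
      have f1 : ((i+j).factorial : ℚ) ≠ 0 := by exact_mod_cast (i+j).factorial_ne_zero
      have f2 : (((n-(i+j)).factorial : ℚ)) ≠ 0 := by exact_mod_cast (n-(i+j)).factorial_ne_zero
      have f3 : ((i.factorial : ℚ)) ≠ 0 := by exact_mod_cast i.factorial_ne_zero
      have f4 : (((n-i).factorial : ℚ)) ≠ 0 := by exact_mod_cast (n-i).factorial_ne_zero
      field_simp
      linear_combination (_root_.bernoulli i * y^j * x^(n-(i+j)) * z^i * z^j) * hc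
    · have h1 : m < i := by omega
      have h2 : n - i < n - m := by omega
      simp [Nat.choose_eq_zero_of_lt h1, Nat.choose_eq_zero_of_lt h2]

/-- Let `G_y(x,z) = ∑_{m,l≥0} s_{l+m−1} (B_m(y)/m!) (x^l/l!) z^{m−1}` (with `s_{−1} = 0`)
and `s(x) = ∑_d s_d x^d/d!`.  Then (a) `G_y(x,z) = G_0(x + yz, z)` and
(b) `G_0(x + z, z) = G_0(x, z) + s(x)`.  Stated coefficientwise in the formal variables
`s_d`: for every `d`, the coefficient of `s_d` (multiplied by `z` to clear `z^{−1}`)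
satisfies the corresponding polynomial identity in `x, y, z`. -/
theorem stmt16 (d : ℕ) (x y z : ℚ) :
    (∑ m ∈ Finset.range (d + 2),
        ((Polynomial.bernoulli m).eval y / (m.factorial : ℚ)) *
          (x ^ (d + 1 - m) / ((d + 1 - m).factorial : ℚ)) * z ^ m =
      ∑ m ∈ Finset.range (d + 2),
        ((Polynomial.bernoulli m).eval 0 / (m.factorial : ℚ)) *
          ((x + y * z) ^ (d + 1 - m) / ((d + 1 - m).factorial : ℚ)) * z ^ m)
    ∧ (∑ m ∈ Finset.range (d + 2),
        ((Polynomial.bernoulli m).eval 0 / (m.factorial : ℚ)) *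
          ((x + z) ^ (d + 1 - m) / ((d + 1 - m).factorial : ℚ)) * z ^ m =
      (∑ m ∈ Finset.range (d + 2),
        ((Polynomial.bernoulli m).eval 0 / (m.factorial : ℚ)) *
          (x ^ (d + 1 - m) / ((d + 1 - m).factorial : ℚ)) * z ^ m)
        + z * (x ^ d / (d.factorial : ℚ))) := by
  constructor
  · exact partA (d+1) x y z
  · have hA := partA (d+1) x 1 z
    rw [one_mul] at hA
    rw [← hA]
    have key : ∀ m ∈ Finset.range (d + 2),
        ((Polynomial.bernoulli m).eval 1 / (m.factorial : ℚ)) *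
          (x ^ (d + 1 - m) / ((d + 1 - m).factorial : ℚ)) * z ^ m =
        ((Polynomial.bernoulli m).eval 0 / (m.factorial : ℚ)) *
          (x ^ (d + 1 - m) / ((d + 1 - m).factorial : ℚ)) * z ^ m
        + (if m = 1 then z * (x ^ d / (d.factorial : ℚ)) else 0) := by
      intro m _
      rcases eq_or_ne m 1 with rfl | hne
      · simp only [if_pos rfl, Polynomial.bernoulli_eval_one, Polynomial.bernoulli_eval_zero,
          bernoulli'_one, bernoulli_one, Nat.add_sub_cancel]
        norm_num
        ring
      · rw [if_neg hne, Polynomial.bernoulli_eval_one, Polynomial.bernoulli_eval_zero,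
          bernoulli_eq_bernoulli'_of_ne_one hne, add_zero]
    rw [Finset.sum_congr rfl key, Finset.sum_add_distrib, Finset.sum_ite_eq' (Finset.range (d+2)) 1]
    simp
end

section
/- Each of the four functions ω_k(t) = (1/Γ(k)) Σ_{l≥0} ([k/5]_l)^5 t^{k+5l} / [k]_{5l}, for k = 1,2,3,4, is a formal power series solution of the Picard–Fuchs equation [D_t^4 − 5^5 t^{−5} Π_{m=1}^4 (D_t − m z)] ω = 0, where D_t = z t d/dt and [a]_n denotes the Pochhammer symbol a(a+1)···(a+n−1). -/
/-!
`D_t` acts diagonally, `D_t (t^n) = n z t^n`, so for `ω = ∑ a_n t^n` the equation says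
`5^5 (n+1)(n+2)(n+3)(n+4) a_{n+5} = n^4 a_n` for all `n`, and `(n-1)(n-2)(n-3)(n-4) a_n = 0`
for `n < 5`. The coefficients of `ω_k` live on `n = k + 5l`. The second condition holds because
the exponent `k ∈ {1,2,3,4}` is a root of the indicial polynomial; on the support the recurrence
is the ratio of consecutive Pochhammer quotients `([k/5]_l)^5 / [k]_{5l}`, and `k ≤ 4` keeps the
shift by 5 from leaving the support.
-/

open scoped Classical

/-- The operator `D_t = z t d/dt`, acting on formal power series in `t` with coefficients
in `ℚ[z]` by `D_t (t^n) = z n t^n`. -/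
noncomputable def Dop (f : PowerSeries (Polynomial ℚ)) : PowerSeries (Polynomial ℚ) :=
  PowerSeries.mk fun n => (n : Polynomial ℚ) * Polynomial.X * PowerSeries.coeff (R := Polynomial ℚ) n f

/-- The operator `D_t − m z`. -/
noncomputable def pfFactor (m : ℕ) (f : PowerSeries (Polynomial ℚ)) :
    PowerSeries (Polynomial ℚ) :=
  Dop f - PowerSeries.C (R := Polynomial ℚ) (Polynomial.C (m : ℚ) * Polynomial.X) * f

/-- The series `ω_k(t) = (1/Γ(k)) ∑_{l≥0} ([k/5]_l)^5 t^{k+5l} / [k]_{5l}`, where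
`[a]_n = a(a+1)⋯(a+n−1)` is the Pochhammer symbol and `Γ(k) = (k−1)!`. -/
noncomputable def omegaPF (k : ℕ) : PowerSeries (Polynomial ℚ) :=
  PowerSeries.mk fun n =>
    if k ≤ n ∧ (n - k) % 5 = 0 then
      Polynomial.C
        ((∏ i ∈ Finset.range ((n - k) / 5), ((k : ℚ) / 5 + (i : ℚ))) ^ 5 /
          ((Nat.factorial (k - 1) : ℚ) * ∏ i ∈ Finset.range (n - k), ((k : ℚ) + (i : ℚ))))
    else 0

open PowerSeries
open scoped Polynomial

local notation "z" => (Polynomial.X : ℚ[X])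

section Operators

variable (f : PowerSeries ℚ[X]) (n : ℕ)

theorem coeff_Dop : coeff n (Dop f) = (n : ℚ[X]) * z * coeff n f :=
  coeff_mk _ _

theorem coeff_pfFactor (m : ℕ) :
    coeff n (pfFactor m f) = ((n : ℚ[X]) - (m : ℚ[X])) * z * coeff n f := by
  simp only [pfFactor, map_sub, coeff_C_mul, coeff_Dop, map_natCast Polynomial.C]
  ring

theorem picardFuchs_of_coeff
    (hrec : ∀ n : ℕ, 5 ^ 5 * (((n : ℚ[X]) + 1) * (n + 2) * (n + 3) * (n + 4)) *
      coeff (n + 5) f = n ^ 4 * coeff n f)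
    (hind : ∀ n : ℕ, n < 5 → ((n : ℚ[X]) - 1) * (n - 2) * (n - 3) * (n - 4) * coeff n f = 0) :
    PowerSeries.X ^ 5 * Dop (Dop (Dop (Dop f))) =
      PowerSeries.C (R := ℚ[X]) (5 ^ 5 : ℚ[X]) *
        pfFactor 1 (pfFactor 2 (pfFactor 3 (pfFactor 4 f))) := by
  refine PowerSeries.ext fun n => ?_
  simp only [coeff_X_pow_mul', coeff_C_mul, coeff_pfFactor, coeff_Dop]
  split_ifs with h5
  · obtain ⟨m, rfl⟩ : ∃ m, n = m + 5 := ⟨n - 5, by omega⟩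
    rw [Nat.add_sub_cancel]
    push_cast
    linear_combination -z ^ 4 * hrec m
  · linear_combination (-5 ^ 5 * z ^ 4 : ℚ[X]) * hind n (by omega)

end Operators

/-- The ratio of consecutive terms `([a/5]_l)^5 / [a]_{5l}` is `(a/5 + l)^5 / ∏_{j<5} (a + 5l + j)`. -/
theorem pochhammer_quotient_step {a : ℚ} (ha : 0 < a) {g : ℚ} (hg : g ≠ 0) (l : ℕ) :
    5 ^ 5 * ((a + 5 * l + 1) * (a + 5 * l + 2) * (a + 5 * l + 3) * (a + 5 * l + 4)) *
      ((∏ i ∈ Finset.range (l + 1), (a / 5 + i)) ^ 5 /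
        (g * ∏ i ∈ Finset.range (5 * l + 5), (a + i))) =
    (a + 5 * l) ^ 4 *
      ((∏ i ∈ Finset.range l, (a / 5 + i)) ^ 5 / (g * ∏ i ∈ Finset.range (5 * l), (a + i))) := by
  have hQ : ∏ i ∈ Finset.range (5 * l), (a + i) ≠ 0 :=
    Finset.prod_ne_zero_iff.2 fun i _ => by positivity
  have hfactor (j : ℕ) : a + 5 * l + j ≠ 0 := by positivity
  have h1 := hfactor 1; have h2 := hfactor 2; have h3 := hfactor 3; have h4 := hfactor 4
  rw [Finset.prod_range_succ, Finset.prod_range_add]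
  simp only [Finset.prod_range_succ, Finset.prod_range_zero]
  push_cast at h1 h2 h3 h4 ⊢
  field_simp
  ring

section Omega

variable {k : ℕ}

theorem omegaPF_recurrence (hk1 : 1 ≤ k) (hk4 : k ≤ 4) (n : ℕ) :
    5 ^ 5 * (((n : ℚ[X]) + 1) * (n + 2) * (n + 3) * (n + 4)) * coeff (n + 5) (omegaPF k) =
      n ^ 4 * coeff n (omegaPF k) := by
  simp only [omegaPF, coeff_mk]
  by_cases h : k ≤ n ∧ (n - k) % 5 = 0
  · obtain ⟨l, rfl⟩ : ∃ l, n = k + 5 * l := ⟨(n - k) / 5, by omega⟩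
    rw [if_pos h, if_pos (by omega), show k + 5 * l + 5 - k = 5 * l + 5 by omega,
      show (5 * l + 5) / 5 = l + 1 by omega, Nat.add_sub_cancel_left,
      Nat.mul_div_cancel_left l (by norm_num)]
    have hk : (0 : ℚ) < k := by exact_mod_cast hk1
    have step := congrArg Polynomial.C (pochhammer_quotient_step hk
      (Nat.cast_ne_zero.2 (Nat.factorial_ne_zero (k - 1))) l)
    simp only [map_mul, map_pow, map_add, map_natCast, map_ofNat] at step
    push_cast at step ⊢
    exact step
  · rw [if_neg h, if_neg (by omega)]
    ring

theorem omegaPF_indicial (hk1 : 1 ≤ k) (n : ℕ) (hn : n < 5) :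
    ((n : ℚ[X]) - 1) * (n - 2) * (n - 3) * (n - 4) * coeff n (omegaPF k) = 0 := by
  simp only [omegaPF, coeff_mk]
  split_ifs with h
  · obtain rfl : n = k := by omega
    interval_cases n <;> norm_num
  · exact mul_zero _

end Omega

/-- Each of the four functions `ω_k`, `k = 1,2,3,4`, is a formal power series solution of
the Picard–Fuchs equation `[D_t^4 − 5^5 t^{−5} ∏_{m=1}^4 (D_t − m z)] ω = 0`, i.e.
(clearing `t^{−5}`): `t^5 D_t^4 ω_k = 5^5 (D_t − z)(D_t − 2z)(D_t − 3z)(D_t − 4z) ω_k`. -/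
theorem stmt18 (k : ℕ) (hk1 : 1 ≤ k) (hk4 : k ≤ 4) :
    PowerSeries.X ^ 5 * Dop (Dop (Dop (Dop (omegaPF k)))) =
      PowerSeries.C (R := Polynomial ℚ) (5 ^ 5 : Polynomial ℚ) *
        pfFactor 1 (pfFactor 2 (pfFactor 3 (pfFactor 4 (omegaPF k)))) :=
  picardFuchs_of_coeff _ (omegaPF_recurrence hk1 hk4) (omegaPF_indicial hk1)
end
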